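/- Every string s in Σ^n (Σ = {0, l, r}) is equivalent under the local moves to one and only one string of the form c_{p,q}; that is, there exist unique integers p, q ≥ 0 with p + q ≤ n such that s ~ c_{p,q}. -/

import Mathlib

/-- The three-letter alphabet `Σ = {0, l, r}` (named `Tri` to avoid clash with Mathlib). -/
inductive Tri : Type
  | zero : Tri
  | left : Tri
  | right : Tri
  deriving DecidableEq

/-- One local move: `00 ↔ lr`, `0l ↔ l0`, or `0r ↔ r0`, applied at some pair of
consecutive positions. -/
def Move (s t : List Tri) : Prop :=
  ∃ u v : List Tri,
    (s = u ++ [Tri.zero, Tri.zero] ++ v ∧ t = u ++ [Tri.left, Tri.right] ++ v) ∨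
    (s = u ++ [Tri.left, Tri.right] ++ v ∧ t = u ++ [Tri.zero, Tri.zero] ++ v) ∨
    (s = u ++ [Tri.zero, Tri.left] ++ v ∧ t = u ++ [Tri.left, Tri.zero] ++ v) ∨
    (s = u ++ [Tri.left, Tri.zero] ++ v ∧ t = u ++ [Tri.zero, Tri.left] ++ v) ∨
    (s = u ++ [Tri.zero, Tri.right] ++ v ∧ t = u ++ [Tri.right, Tri.zero] ++ v) ∨
    (s = u ++ [Tri.right, Tri.zero] ++ v ∧ t = u ++ [Tri.zero, Tri.right] ++ v)

/-- Equivalence of strings: `s ~ t` iff `t` can be obtained from `s` by a finite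
sequence of local moves. -/
def MoveEquiv (s t : List Tri) : Prop := Relation.ReflTransGen Move s t

/-- The canonical string `c_{p,q}` of length `n`: `p` letters `r`, followed by
`n - p - q` letters `0`, followed by `q` letters `l`. -/
def cStr (n p q : ℕ) : List Tri :=
  List.replicate p Tri.right ++ List.replicate (n - p - q) Tri.zero ++
    List.replicate q Tri.left

def step : ℕ × ℕ × ℕ → Tri → ℕ × ℕ × ℕ
  | (p, m, q), Tri.zero => (p, m + 1, q)
  | (p, m, q), Tri.left => (p, m, q + 1)
  | (p, m, 0), Tri.right => (p + 1, m, 0)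
  | (p, m, q + 1), Tri.right => (p, m + 2, q)

def can (t : ℕ × ℕ × ℕ) : List Tri :=
  List.replicate t.1 Tri.right ++ List.replicate t.2.1 Tri.zero ++
    List.replicate t.2.2 Tri.left

lemma move_foldl {s t : List Tri} (h : Move s t) (st : ℕ × ℕ × ℕ) :
    List.foldl step st s = List.foldl step st t := by
  obtain ⟨u, v, h⟩ := h
  rcases h with ⟨h1,h2⟩|⟨h1,h2⟩|⟨h1,h2⟩|⟨h1,h2⟩|⟨h1,h2⟩|⟨h1,h2⟩ <;> subst h1 <;> subst h2 <;>
    simp only [List.foldl_append, List.foldl_cons, List.foldl_nil] <;>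
    (obtain ⟨p,m,q⟩ := List.foldl step st u) <;> rcases q with _|q <;> simp [step]

lemma move_ctx (x y : List Tri) {s t : List Tri} (h : Move s t) :
    Move (x ++ s ++ y) (x ++ t ++ y) := by
  obtain ⟨a, b, h⟩ := h
  refine ⟨x ++ a, b ++ y, ?_⟩
  rcases h with ⟨h1,h2⟩|⟨h1,h2⟩|⟨h1,h2⟩|⟨h1,h2⟩|⟨h1,h2⟩|⟨h1,h2⟩ <;> subst h1 <;> subst h2 <;>
    simp [List.append_assoc]

lemma mequiv_ctx (x y : List Tri) {s t : List Tri} (h : MoveEquiv s t) :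
    MoveEquiv (x ++ s ++ y) (x ++ t ++ y) :=
  Relation.ReflTransGen.lift (fun w => x ++ w ++ y) (fun _ _ hab => move_ctx x y hab) _ _ h

lemma zero_past_left (q : ℕ) :
    MoveEquiv (List.replicate q Tri.left ++ [Tri.zero]) (Tri.zero :: List.replicate q Tri.left) := by
  induction q with
  | zero => exact Relation.ReflTransGen.refl
  | succ q ih =>
    have h1 : MoveEquiv (Tri.left :: (List.replicate q Tri.left ++ [Tri.zero]))
        (Tri.left :: Tri.zero :: List.replicate q Tri.left) := by
      simpa using mequiv_ctx [Tri.left] [] ih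
    have h2 : Move (Tri.left :: Tri.zero :: List.replicate q Tri.left)
        (Tri.zero :: Tri.left :: List.replicate q Tri.left) := by
      exact ⟨[], List.replicate q Tri.left, by simp⟩
    have : MoveEquiv (List.replicate (q+1) Tri.left ++ [Tri.zero])
        (Tri.zero :: Tri.left :: List.replicate q Tri.left) := by
      simpa [List.replicate_succ, MoveEquiv] using h1.trans (Relation.ReflTransGen.single h2)
    simpa [List.replicate_succ] using this

lemma zero_past_right (m : ℕ) :
    MoveEquiv (List.replicate m Tri.zero ++ [Tri.right]) (Tri.right :: List.replicate m Tri.zero) := by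
  induction m with
  | zero => exact Relation.ReflTransGen.refl
  | succ m ih =>
    have h1 : MoveEquiv (Tri.zero :: (List.replicate m Tri.zero ++ [Tri.right]))
        (Tri.zero :: Tri.right :: List.replicate m Tri.zero) := by
      simpa using mequiv_ctx [Tri.zero] [] ih
    have h2 : Move (Tri.zero :: Tri.right :: List.replicate m Tri.zero)
        (Tri.right :: Tri.zero :: List.replicate m Tri.zero) :=
      ⟨[], List.replicate m Tri.zero, by simp⟩
    simpa [List.replicate_succ, MoveEquiv] using h1.trans (Relation.ReflTransGen.single h2)

lemma can_step (st : ℕ × ℕ × ℕ) (a : Tri) :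
    MoveEquiv (can st ++ [a]) (can (step st a)) := by
  obtain ⟨p, m, q⟩ := st
  cases a with
  | left =>
    have : can (p,m,q) ++ [Tri.left] = can (step (p,m,q) Tri.left) := by
      simp [can, step, List.replicate_succ' (n := q)]
    rw [this]; exact Relation.ReflTransGen.refl
  | zero =>
    have h1 := mequiv_ctx (List.replicate p Tri.right ++ List.replicate m Tri.zero) []
      (zero_past_left q)
    have e1 : can (p,m,q) ++ [Tri.zero]
        = (List.replicate p Tri.right ++ List.replicate m Tri.zero)
          ++ (List.replicate q Tri.left ++ [Tri.zero]) ++ [] := by simp [can]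
    have e2 : (List.replicate p Tri.right ++ List.replicate m Tri.zero)
          ++ (Tri.zero :: List.replicate q Tri.left) ++ []
        = can (step (p,m,q) Tri.zero) := by
      simp [can, step, List.replicate_succ' (n := m)]
    rw [e1, ← e2]; exact h1
  | right =>
    cases q with
    | zero =>
      have h1 := mequiv_ctx (List.replicate p Tri.right) [] (zero_past_right m)
      have e1 : can (p,m,0) ++ [Tri.right]
          = List.replicate p Tri.right ++ (List.replicate m Tri.zero ++ [Tri.right]) ++ [] := by
        simp [can]
      have e2 : List.replicate p Tri.right ++ (Tri.right :: List.replicate m Tri.zero) ++ []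
          = can (step (p,m,0) Tri.right) := by
        simp [can, step, List.replicate_succ' (n := p), List.replicate_succ]
      rw [e1, ← e2]; exact h1
    | succ q =>
      -- can (p,m,q+1) ++ [r] : last two letters are l r, turn into 0 0, then move the
      -- two zeros left past the remaining q letters l.
      have hmv : Move (can (p,m,q+1) ++ [Tri.right])
          ((List.replicate p Tri.right ++ List.replicate m Tri.zero ++ List.replicate q Tri.left)
            ++ [Tri.zero, Tri.zero] ++ []) := by
        refine ⟨List.replicate p Tri.right ++ List.replicate m Tri.zero ++ List.replicate q Tri.left,
          [], Or.inr (Or.inl ⟨?_, rfl⟩)⟩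
        simp [can, List.replicate_succ' (n := q)]
      have h1 : MoveEquiv (List.replicate q Tri.left ++ [Tri.zero, Tri.zero])
          (Tri.zero :: Tri.zero :: List.replicate q Tri.left) := by
        have a1 : MoveEquiv ((List.replicate q Tri.left ++ [Tri.zero]) ++ [Tri.zero])
            ((Tri.zero :: List.replicate q Tri.left) ++ [Tri.zero]) := by
          simpa using mequiv_ctx [] [Tri.zero] (zero_past_left q)
        have a2 : MoveEquiv (Tri.zero :: (List.replicate q Tri.left ++ [Tri.zero]))
            (Tri.zero :: Tri.zero :: List.replicate q Tri.left) := by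
          simpa using mequiv_ctx [Tri.zero] [] (zero_past_left q)
        refine Relation.ReflTransGen.trans ?_ a2
        simpa [MoveEquiv] using a1
      have h2 := mequiv_ctx (List.replicate p Tri.right ++ List.replicate m Tri.zero) [] h1
      have e2 : (List.replicate p Tri.right ++ List.replicate m Tri.zero)
            ++ (Tri.zero :: Tri.zero :: List.replicate q Tri.left) ++ []
          = can (step (p,m,q+1) Tri.right) := by
        simp [can, step, List.replicate_succ' (n := m+1), List.replicate_succ' (n := m),
          List.replicate_succ]
      refine Relation.ReflTransGen.trans (Relation.ReflTransGen.single hmv) ?_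
      rw [← e2]
      simpa [MoveEquiv] using h2

def inv (s : List Tri) : ℕ × ℕ × ℕ := List.foldl step (0,0,0) s

lemma equiv_can (s : List Tri) : MoveEquiv s (can (inv s)) := by
  induction s using List.reverseRecOn with
  | nil => exact Relation.ReflTransGen.refl
  | append_singleton s a ih =>
    have h1 : MoveEquiv (s ++ [a]) (can (inv s) ++ [a]) := by
      simpa using mequiv_ctx [] [a] ih
    have h2 : inv (s ++ [a]) = step (inv s) a := by
      simp [inv, List.foldl_append]
    rw [h2]
    exact h1.trans (can_step (inv s) a)

lemma equiv_inv {s t : List Tri} (h : MoveEquiv s t) : inv s = inv t := by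
  induction h with
  | refl => rfl
  | tail _ hmv ih => exact ih.trans (move_foldl hmv (0,0,0))

lemma inv_sum (s : List Tri) : ∀ st : ℕ × ℕ × ℕ,
    (List.foldl step st s).1 + (List.foldl step st s).2.1 + (List.foldl step st s).2.2
      = st.1 + st.2.1 + st.2.2 + s.length := by
  induction s with
  | nil => intro st; simp
  | cons a s ih =>
    intro st
    obtain ⟨p, m, q⟩ := st
    have := ih (step (p,m,q) a)
    cases a <;> rcases q with _|q <;> simp [step] at this ⊢ <;> omega

lemma inv_can (p m q : ℕ) : inv (can (p, m, q)) = (p, m, q) := by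
  have h1 : ∀ k a b, List.foldl step (a, b, 0) (List.replicate k Tri.right) = (a + k, b, 0) := by
    intro k
    induction k with
    | zero => intro a b; simp
    | succ k ih => intro a b; rw [List.replicate_succ]; simpa [step, Nat.add_comm, Nat.add_assoc,
        Nat.add_left_comm] using ih (a+1) b
  have h2 : ∀ k (st : ℕ × ℕ × ℕ), List.foldl step st (List.replicate k Tri.zero)
      = (st.1, st.2.1 + k, st.2.2) := by
    intro k
    induction k with
    | zero => intro st; simp
    | succ k ih => intro st; rw [List.replicate_succ]
                   obtain ⟨a,b,c⟩ := st
                   simpa [step, Nat.add_comm, Nat.add_assoc, Nat.add_left_comm] using ih (a, b+1, c)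
  have h3 : ∀ k (st : ℕ × ℕ × ℕ), List.foldl step st (List.replicate k Tri.left)
      = (st.1, st.2.1, st.2.2 + k) := by
    intro k
    induction k with
    | zero => intro st; simp
    | succ k ih => intro st; rw [List.replicate_succ]
                   obtain ⟨a,b,c⟩ := st
                   simpa [step, Nat.add_comm, Nat.add_assoc, Nat.add_left_comm] using ih (a, b, c+1)
  unfold inv can
  simp only [List.foldl_append]
  rw [h1, h2, h3]
  simp

/-- Every string `s ∈ Σ^n` is equivalent under the local moves to one and only one
string of the form `c_{p,q}`. -/
theorem stmt0 (n : ℕ) (s : List Tri) (hs : s.length = n) :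
    ∃! pq : ℕ × ℕ, pq.1 + pq.2 ≤ n ∧ MoveEquiv s (cStr n pq.1 pq.2) := by
  rcases hinv : inv s with ⟨p, m, q⟩
  have hsum : p + m + q = n := by
    have := inv_sum s (0,0,0)
    rw [show List.foldl step (0,0,0) s = inv s from rfl, hinv] at this
    simpa [hs] using this
  have hcan : cStr n p q = can (p, m, q) := by
    have : n - p - q = m := by omega
    simp [cStr, can, this]
  refine ⟨(p, q), ⟨by omega, ?_⟩, ?_⟩
  · rw [hcan, ← hinv]; exact equiv_can s
  · rintro ⟨p', q'⟩ ⟨hle, heq⟩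
    have h1 : inv s = inv (cStr n p' q') := equiv_inv heq
    have h2 : inv (cStr n p' q') = (p', n - p' - q', q') := by
      simpa [cStr, can] using inv_can p' (n - p' - q') q'
    rw [hinv, h2] at h1
    simp only [Prod.mk.injEq] at h1
    obtain ⟨e1, _, e3⟩ := h1
    simp [e1, e3]
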